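/- For every n̄-admissible collection 𝐬 the following identity of rational functions holds: ∏_{j=3}^{N−1} Ẑ_{s̄^j}(n̄ − 𝐬̄^{j+1}) · ∏_{j=2}^{N−1} X^{(j)}(n̄ − 𝐬̄^{j+1}; s̄^j) = ∏_{b=2}^{N−1} ∏_{a=1}^{b−1} ∏_{ℓ=1}^{s^b_a} [ (t^a_{ℓ+n_a−𝐬^b_a}/t^{a+1}_{ℓ+n_{a+1}−𝐬^b_{a+1}}) / (1 − t^a_{ℓ+n_a−𝐬^b_a}/t^{a+1}_{ℓ+n_{a+1}−𝐬^b_{a+1}}) · ∏_{ℓ′=1}^{ℓ+n_{a+1}−𝐬^b_{a+1}−1} (q − q⁻¹·t^a_{ℓ+n_a−𝐬^b_a}/t^{a+1}_{ℓ′}) / (1 − t^a_{ℓ+n_a−𝐬^b_a}/t^{a+1}_{ℓ′}) ]. -/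
import Mathlib


open scoped BigOperators
open MvPolynomial

noncomputable section

/-- The base field `ℂ(q)`. -/
abbrev F0 : Type := RatFunc ℂ

/-- The field `K` of rational functions over `ℂ(q)` in the variables `t^a_ℓ`,
indexed by pairs `(a, ℓ) : ℕ × ℕ`. -/
abbrev K2 : Type := FractionRing (MvPolynomial (ℕ × ℕ) F0)

/-- The element `q` of `K`. -/
def q2 : K2 := algebraMap (MvPolynomial (ℕ × ℕ) F0) _ (C RatFunc.X)

/-- The variable `t^a_ℓ`. -/
def tV (a ℓ : ℕ) : K2 := algebraMap (MvPolynomial (ℕ × ℕ) F0) _ (X (a, ℓ))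

/-- The interval `{lo+1, …, lo+k} ⊆ ℕ` identified with `Fin k`. -/
def intervalEquiv (lo k : ℕ) : Fin k ≃ {x : ℕ // lo + 1 ≤ x ∧ x < lo + 1 + k} where
  toFun i := ⟨lo + 1 + (i : ℕ), ⟨Nat.le_add_right _ _, by have := i.isLt; omega⟩⟩
  invFun x := ⟨(x : ℕ) - (lo + 1), by have := x.2; omega⟩
  left_inv i := Fin.ext (by simp)
  right_inv x := Subtype.ext (by have := x.2; simp; omega)

/-- The permutation of `ℕ` acting as `σ` on the interval `{lo+1,…,lo+k}`
(sending `lo+1+i ↦ lo+1+σ(i)`) and as the identity elsewhere. -/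
def intervalPerm (lo k : ℕ) (σ : Equiv.Perm (Fin k)) : Equiv.Perm ℕ :=
  σ.extendDomain (intervalEquiv lo k)

/-- The permutation of the variable indices permuting the second component of
variables of type `a` by `intervalPerm lo k σ`, fixing all other variables. -/
def blockPerm (a lo k : ℕ) (σ : Equiv.Perm (Fin k)) : Equiv.Perm (ℕ × ℕ) :=
  Equiv.prodShear (Equiv.refl ℕ)
    (fun b => if b = a then intervalPerm lo k σ else Equiv.refl ℕ)

/-- The substitution field automorphism of `K` induced by a permutation
of the variable indices. -/
def liftP (e : Equiv.Perm (ℕ × ℕ)) : K2 ≃+* K2 :=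
  IsFractionRing.ringEquivOfRingEquiv (MvPolynomial.renameEquiv F0 e).toRingEquiv

/-- The q-symmetrization over the group of variables `t^a_ℓ`, `lo < ℓ ≤ lo + k`. -/
def symBlock (a lo k : ℕ) (G : K2) : K2 :=
  ∑ σ : Equiv.Perm (Fin k),
    (∏ p ∈ Finset.univ.filter
        (fun p : Fin k × Fin k => p.1 < p.2 ∧ σ p.2 < σ p.1),
      (q2 * tV a (lo + 1 + (σ p.2 : ℕ)) - q2⁻¹ * tV a (lo + 1 + (σ p.1 : ℕ))) /
        (q2⁻¹ * tV a (lo + 1 + (σ p.2 : ℕ)) - q2 * tV a (lo + 1 + (σ p.1 : ℕ)))) *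
      liftP (blockPerm a lo k σ) G

/-- `U(x₁,…,x_k; y₁,…,y_k) = ∏_i (y_i/x_i)/(1−y_i/x_i) ·
∏_{m<n} (q⁻¹ − q·y_m/x_n)/(1 − y_m/x_n)` (for `1`-based families `x y : ℕ → K`). -/
def Ub (x y : ℕ → K2) (k : ℕ) : K2 :=
  (∏ i ∈ Finset.range k, (y (i + 1) / x (i + 1)) / (1 - y (i + 1) / x (i + 1))) *
    ∏ p ∈ (Finset.range k ×ˢ Finset.range k).filter (fun p => p.1 < p.2),
      (q2⁻¹ - q2 * y (p.1 + 1) / x (p.2 + 1)) / (1 - y (p.1 + 1) / x (p.2 + 1))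

/-- `V(x₁,…,x_k; y₁,…,y_k) = ∏_i (y_i/x_i)/(1−y_i/x_i) ·
∏_{n<m} (q − q⁻¹·y_n/x_m)/(1 − y_n/x_m)` (for `1`-based families `x y : ℕ → K`). -/
def Vb (x y : ℕ → K2) (k : ℕ) : K2 :=
  (∏ i ∈ Finset.range k, (y (i + 1) / x (i + 1)) / (1 - y (i + 1) / x (i + 1))) *
    ∏ p ∈ (Finset.range k ×ˢ Finset.range k).filter (fun p => p.1 < p.2),
      (q2 - q2⁻¹ * y (p.1 + 1) / x (p.2 + 1)) / (1 - y (p.1 + 1) / x (p.2 + 1))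

/-- `𝐬^j_a = s^j_a + s^{j+1}_a + ⋯ + s^{N−1}_a` (with `𝐬^N_a = 0`). -/
def Ss (N : ℕ) (ss : ℕ → ℕ → ℕ) (j a : ℕ) : ℕ := ∑ b ∈ Finset.Icc j (N - 1), ss b a

/-- `Ẑ_{s̄^j}(n̄ − 𝐬̄^{j+1})`. -/
def Zhat (N : ℕ) (n : ℕ → ℕ) (ss : ℕ → ℕ → ℕ) (j : ℕ) : K2 :=
  ∏ a ∈ Finset.Icc 1 (N - 2),
    ∏ ℓ ∈ Finset.Icc (n a - Ss N ss (j + 1) a - ss j a + 1) (n a - Ss N ss (j + 1) a),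
      ∏ ℓ' ∈ Finset.Icc 1 (n (a + 1) - Ss N ss (j + 1) (a + 1) - ss j (a + 1)),
        (q2 - q2⁻¹ * tV a ℓ / tV (a + 1) ℓ') / (1 - tV a ℓ / tV (a + 1) ℓ')

/-- `X^{(j)}(n̄ − 𝐬̄^{j+1}; s̄^j)`. -/
def Xrow (N : ℕ) (n : ℕ → ℕ) (ss : ℕ → ℕ → ℕ) (j : ℕ) : K2 :=
  ∏ a ∈ Finset.Icc 1 (j - 1),
    Vb (fun i => tV (a + 1) (n (a + 1) - Ss N ss (j + 1) (a + 1) - ss j (a + 1) + ss j a + 1 - i))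
      (fun i => tV a (n a - Ss N ss (j + 1) a + 1 - i)) (ss j a)

section AuxProd
variable {M : Type*} [CommMonoid M]

theorem prodIccShift (m k : ℕ) (f : ℕ → M) :
    (∏ i ∈ Finset.Icc (m + 1) (m + k), f i) = ∏ i ∈ Finset.range k, f (m + 1 + i) := by
  rw [← Finset.Ico_add_one_right_eq_Icc, Finset.prod_Ico_eq_prod_range,
    show m + k + 1 - (m + 1) = k from by omega]

theorem prodIcc1 (k : ℕ) (f : ℕ → M) :
    (∏ i ∈ Finset.Icc 1 k, f i) = ∏ i ∈ Finset.range k, f (1 + i) := by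
  simpa using prodIccShift 0 k f

theorem pairUnfold (k : ℕ) (F : ℕ × ℕ → M) :
    (∏ p ∈ (Finset.range k ×ˢ Finset.range k).filter (fun p => p.1 < p.2), F p) =
      ∏ j ∈ Finset.range k, ∏ i ∈ Finset.range j, F (i, j) := by
  rw [Finset.prod_filter, Finset.prod_product_right]
  refine Finset.prod_congr rfl (fun j hj => ?_)
  rw [← Finset.prod_filter]
  refine Finset.prod_congr ?_ (fun i _ => rfl)
  ext i
  simp only [Finset.mem_filter, Finset.mem_range]
  simp only [Finset.mem_range] at hj
  omega

theorem doubleReflect (k : ℕ) (F : ℕ → ℕ → M) :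
    (∏ j ∈ Finset.range k, ∏ i ∈ Finset.range j, F i j) =
      ∏ j ∈ Finset.range k, ∏ i ∈ Finset.range j, F (k - 1 - j) (k - 1 - i) := by
  rw [Finset.prod_sigma', Finset.prod_sigma']
  refine Finset.prod_nbij' (fun p => ⟨k - 1 - p.2, k - 1 - p.1⟩)
    (fun p => ⟨k - 1 - p.2, k - 1 - p.1⟩) ?_ ?_ ?_ ?_ ?_
  · rintro ⟨j, i⟩ h
    simp only [Finset.mem_sigma, Finset.mem_range] at h ⊢
    omega
  · rintro ⟨j, i⟩ h
    simp only [Finset.mem_sigma, Finset.mem_range] at h ⊢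
    omega
  · rintro ⟨j, i⟩ h
    simp only [Finset.mem_sigma, Finset.mem_range] at h
    simp only [Sigma.mk.inj_iff, heq_eq_eq]
    omega
  · rintro ⟨j, i⟩ h
    simp only [Finset.mem_sigma, Finset.mem_range] at h
    simp only [Sigma.mk.inj_iff, heq_eq_eq]
    omega
  · rintro ⟨j, i⟩ h
    simp only [Finset.mem_sigma, Finset.mem_range] at h
    have h1 : k - 1 - (k - 1 - j) = j := by omega
    have h2 : k - 1 - (k - 1 - i) = i := by omega
    rw [h1, h2]

end AuxProd

/-- `(q − q⁻¹·t^a_u/t^{a+1}_v)/(1 − t^a_u/t^{a+1}_v)`. -/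
def ffq (a u v : ℕ) : K2 :=
  (q2 - q2⁻¹ * tV a u / tV (a + 1) v) / (1 - tV a u / tV (a + 1) v)

/-- `(t^a_u/t^{a+1}_v)/(1 − t^a_u/t^{a+1}_v)`. -/
def ggq (a u v : ℕ) : K2 :=
  tV a u / tV (a + 1) v / (1 - tV a u / tV (a + 1) v)

def Ap (a Ra R k : ℕ) : K2 :=
  ∏ ℓ ∈ Finset.range k, ggq a (Ra + 1 + ℓ) (R + 1 + ℓ)

def Bp (a Ra R k : ℕ) : K2 :=
  ∏ ℓ ∈ Finset.range k, ∏ m ∈ Finset.range R, ffq a (Ra + 1 + ℓ) (1 + m)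

def Cp (a Ra R k : ℕ) : K2 :=
  ∏ ℓ ∈ Finset.range k, ∏ m ∈ Finset.range ℓ, ffq a (Ra + 1 + ℓ) (R + 1 + m)

theorem Ap_def (a Ra R k : ℕ) :
    Ap a Ra R k = ∏ ℓ ∈ Finset.range k, ggq a (Ra + 1 + ℓ) (R + 1 + ℓ) := rfl
theorem Bp_def (a Ra R k : ℕ) :
    Bp a Ra R k = ∏ ℓ ∈ Finset.range k, ∏ m ∈ Finset.range R, ffq a (Ra + 1 + ℓ) (1 + m) := rfl
theorem Cp_def (a Ra R k : ℕ) :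
    Cp a Ra R k = ∏ ℓ ∈ Finset.range k, ∏ m ∈ Finset.range ℓ, ffq a (Ra + 1 + ℓ) (R + 1 + m) := rfl
theorem ggq_def (a u v : ℕ) :
    ggq a u v = tV a u / tV (a + 1) v / (1 - tV a u / tV (a + 1) v) := rfl

theorem Bp_zeroR (a Ra k : ℕ) : Bp a Ra 0 k = 1 := by simp [Bp]

theorem statement13 (N : ℕ) (hN : 3 ≤ N) (n : ℕ → ℕ) (ss : ℕ → ℕ → ℕ)
    (hzero : ∀ b a, b < a → ss b a = 0)
    (h0 : ∀ b, ss b 0 = 0)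
    (hmono : ∀ b a, 1 ≤ b → b ≤ N - 1 → a < b → ss b a ≤ ss b (a + 1))
    (hsum : ∀ a, 1 ≤ a → a ≤ N - 1 → n a = ∑ b ∈ Finset.Icc a (N - 1), ss b a) :
    (∏ j ∈ Finset.Icc 3 (N - 1), Zhat N n ss j) * ∏ j ∈ Finset.Icc 2 (N - 1), Xrow N n ss j =
      ∏ b ∈ Finset.Icc 2 (N - 1), ∏ a ∈ Finset.Icc 1 (b - 1), ∏ ℓ ∈ Finset.Icc 1 (ss b a),
        ((tV a (ℓ + n a - Ss N ss b a) / tV (a + 1) (ℓ + n (a + 1) - Ss N ss b (a + 1))) /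
            (1 - tV a (ℓ + n a - Ss N ss b a) / tV (a + 1) (ℓ + n (a + 1) - Ss N ss b (a + 1)))) *
          ∏ ℓ' ∈ Finset.Icc 1 (ℓ + n (a + 1) - Ss N ss b (a + 1) - 1),
            (q2 - q2⁻¹ * tV a (ℓ + n a - Ss N ss b a) / tV (a + 1) ℓ') /
              (1 - tV a (ℓ + n a - Ss N ss b a) / tV (a + 1) ℓ') := by
  have hN1 : 2 ≤ N - 1 := by omega
  have hSs_le : ∀ j a, 1 ≤ a → a ≤ N - 1 → a ≤ j → Ss N ss j a ≤ n a := by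
    intro j a h1 h2 h3
    rw [hsum a h1 h2]
    exact Finset.sum_le_sum_of_subset (Finset.Icc_subset_Icc_left h3)
  have hSs_step : ∀ j a, j ≤ N - 1 → Ss N ss j a = ss j a + Ss N ss (j + 1) a := by
    intro j a hj
    rw [Ss, Ss, show Finset.Icc j (N - 1) = insert j (Finset.Icc (j + 1) (N - 1)) from by
        ext x; simp only [Finset.mem_insert, Finset.mem_Icc]; omega,
      Finset.sum_insert (by simp only [Finset.mem_Icc]; omega)]
  -- Row form of `Zhat`.
  have Zrow : ∀ j, 2 ≤ j → j ≤ N - 1 →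
      Zhat N n ss j = ∏ a ∈ Finset.Icc 1 (j - 1),
        Bp a (n a - Ss N ss j a) (n (a + 1) - Ss N ss j (a + 1)) (ss j a) := by
    intro j hj2 hj
    rw [Zhat]
    refine Eq.trans (Finset.prod_subset
        (Finset.Icc_subset_Icc_right (by omega : j - 1 ≤ N - 2)) ?_).symm
      (Finset.prod_congr rfl ?_)
    · intro a ha hna
      simp only [Finset.mem_Icc] at ha hna
      have haj : j ≤ a := by omega
      rcases eq_or_lt_of_le haj with hja | hja
      · subst hja
        have e1 : ss j (j + 1) = 0 := hzero j (j + 1) (by omega)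
        have e2 : n (j + 1) = Ss N ss (j + 1) (j + 1) := hsum (j + 1) (by omega) (by omega)
        rw [show n (j + 1) - Ss N ss (j + 1) (j + 1) - ss j (j + 1) = 0 from by omega,
          Finset.Icc_eq_empty (by omega : ¬(1 : ℕ) ≤ 0)]
        simp
      · have e1 : ss j a = 0 := hzero j a hja
        rw [e1, Nat.sub_zero,
          Finset.Icc_eq_empty
            (by omega : ¬n a - Ss N ss (j + 1) a + 1 ≤ n a - Ss N ss (j + 1) a)]
        simp
    · intro a ha
      simp only [Finset.mem_Icc] at ha
      have h1 : Ss N ss j a ≤ n a := hSs_le j a ha.1 (by omega) (by omega)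
      have h2 : Ss N ss j (a + 1) ≤ n (a + 1) := hSs_le j (a + 1) (by omega) (by omega) (by omega)
      have h3 : Ss N ss j a = ss j a + Ss N ss (j + 1) a := hSs_step j a hj
      have h4 : Ss N ss j (a + 1) = ss j (a + 1) + Ss N ss (j + 1) (a + 1) := hSs_step j (a + 1) hj
      rw [show n a - Ss N ss (j + 1) a - ss j a = n a - Ss N ss j a from by omega,
        show n (a + 1) - Ss N ss (j + 1) (a + 1) - ss j (a + 1)
            = n (a + 1) - Ss N ss j (a + 1) from by omega,
        show n a - Ss N ss (j + 1) a = n a - Ss N ss j a + ss j a from by omega,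
        prodIccShift, Bp_def]
      refine Finset.prod_congr rfl fun ℓ _ => ?_
      beta_reduce
      rw [prodIcc1]
      rfl
  -- Row form of `Xrow`.
  have Xrowlem : ∀ j, 2 ≤ j → j ≤ N - 1 →
      Xrow N n ss j = ∏ a ∈ Finset.Icc 1 (j - 1),
        (Ap a (n a - Ss N ss j a) (n (a + 1) - Ss N ss j (a + 1)) (ss j a) *
          Cp a (n a - Ss N ss j a) (n (a + 1) - Ss N ss j (a + 1)) (ss j a)) := by
    intro j hj2 hj
    rw [Xrow]
    refine Finset.prod_congr rfl fun a ha => ?_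
    simp only [Finset.mem_Icc] at ha
    have h1 : Ss N ss j a ≤ n a := hSs_le j a ha.1 (by omega) (by omega)
    have h2 : Ss N ss j (a + 1) ≤ n (a + 1) := hSs_le j (a + 1) (by omega) (by omega) (by omega)
    have h3 : Ss N ss j a = ss j a + Ss N ss (j + 1) a := hSs_step j a hj
    have h4 : Ss N ss j (a + 1) = ss j (a + 1) + Ss N ss (j + 1) (a + 1) := hSs_step j (a + 1) hj
    rw [show n (a + 1) - Ss N ss (j + 1) (a + 1) - ss j (a + 1)
          = n (a + 1) - Ss N ss j (a + 1) from by omega,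
      show n a - Ss N ss (j + 1) a = n a - Ss N ss j a + ss j a from by omega]
    set Da := n a - Ss N ss j a with hDa
    set R := n (a + 1) - Ss N ss j (a + 1) with hR
    set k := ss j a with hk
    simp only [Vb]
    congr 1
    · -- the diagonal part gives `Ap`
      rw [Ap_def, ← Finset.prod_range_reflect (fun ℓ => ggq a (Da + 1 + ℓ) (R + 1 + ℓ)) k]
      refine Finset.prod_congr rfl fun i hi => ?_
      simp only [Finset.mem_range] at hi
      show _ = ggq a (Da + 1 + (k - 1 - i)) (R + 1 + (k - 1 - i))
      rw [ggq_def, show Da + 1 + (k - 1 - i) = Da + k + 1 - (i + 1) from by omega,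
        show R + 1 + (k - 1 - i) = R + k + 1 - (i + 1) from by omega]
    · -- the off-diagonal part gives `Cp`
      show (∏ p ∈ (Finset.range k ×ˢ Finset.range k).filter (fun p => p.1 < p.2),
          ffq a (Da + k + 1 - (p.1 + 1)) (R + k + 1 - (p.2 + 1))) = Cp a Da R k
      rw [pairUnfold k (fun p => ffq a (Da + k + 1 - (p.1 + 1)) (R + k + 1 - (p.2 + 1))),
        doubleReflect, Cp_def]
      refine Finset.prod_congr rfl fun ℓ hℓ => Finset.prod_congr rfl fun m hm => ?_
      simp only [Finset.mem_range] at hℓ hm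
      show ffq a (Da + k + 1 - (k - 1 - ℓ + 1)) (R + k + 1 - (k - 1 - m + 1)) = _
      rw [show Da + k + 1 - (k - 1 - ℓ + 1) = Da + 1 + ℓ from by omega,
        show R + k + 1 - (k - 1 - m + 1) = R + 1 + m from by omega]
  -- Row form of the right-hand side.
  have Rrow : ∀ j, 2 ≤ j → j ≤ N - 1 →
      (∏ a ∈ Finset.Icc 1 (j - 1), ∏ ℓ ∈ Finset.Icc 1 (ss j a),
        ((tV a (ℓ + n a - Ss N ss j a) / tV (a + 1) (ℓ + n (a + 1) - Ss N ss j (a + 1))) /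
            (1 - tV a (ℓ + n a - Ss N ss j a) / tV (a + 1) (ℓ + n (a + 1) - Ss N ss j (a + 1)))) *
          ∏ ℓ' ∈ Finset.Icc 1 (ℓ + n (a + 1) - Ss N ss j (a + 1) - 1),
            (q2 - q2⁻¹ * tV a (ℓ + n a - Ss N ss j a) / tV (a + 1) ℓ') /
              (1 - tV a (ℓ + n a - Ss N ss j a) / tV (a + 1) ℓ')) =
      ∏ a ∈ Finset.Icc 1 (j - 1),
        (Ap a (n a - Ss N ss j a) (n (a + 1) - Ss N ss j (a + 1)) (ss j a) *
          (Bp a (n a - Ss N ss j a) (n (a + 1) - Ss N ss j (a + 1)) (ss j a) *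
            Cp a (n a - Ss N ss j a) (n (a + 1) - Ss N ss j (a + 1)) (ss j a))) := by
    intro j hj2 hj
    refine Finset.prod_congr rfl fun a ha => ?_
    simp only [Finset.mem_Icc] at ha
    have h1 : Ss N ss j a ≤ n a := hSs_le j a ha.1 (by omega) (by omega)
    have h2 : Ss N ss j (a + 1) ≤ n (a + 1) := hSs_le j (a + 1) (by omega) (by omega) (by omega)
    rw [prodIcc1, Ap_def, Bp_def, Cp_def, ← Finset.prod_mul_distrib,
      ← Finset.prod_mul_distrib]
    refine Finset.prod_congr rfl fun i hi => ?_
    simp only [Finset.mem_range] at hi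
    beta_reduce
    rw [show 1 + i + n a - Ss N ss j a = n a - Ss N ss j a + 1 + i from by omega,
      show 1 + i + n (a + 1) - Ss N ss j (a + 1)
          = n (a + 1) - Ss N ss j (a + 1) + 1 + i from by omega,
      show n (a + 1) - Ss N ss j (a + 1) + 1 + i - 1
          = n (a + 1) - Ss N ss j (a + 1) + i from by omega,
      show Finset.Icc 1 (n (a + 1) - Ss N ss j (a + 1) + i)
          = Finset.Ioc 0 (n (a + 1) - Ss N ss j (a + 1) + i) from by
        ext x; simp only [Finset.mem_Icc, Finset.mem_Ioc]; omega,
      ← Finset.prod_Ioc_consecutive _ (Nat.zero_le (n (a + 1) - Ss N ss j (a + 1)))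
        (Nat.le_add_right (n (a + 1) - Ss N ss j (a + 1)) i),
      show Finset.Ioc 0 (n (a + 1) - Ss N ss j (a + 1))
          = Finset.Icc 1 (n (a + 1) - Ss N ss j (a + 1)) from by
        ext x; simp only [Finset.mem_Icc, Finset.mem_Ioc]; omega,
      show Finset.Ioc (n (a + 1) - Ss N ss j (a + 1)) (n (a + 1) - Ss N ss j (a + 1) + i)
          = Finset.Icc (n (a + 1) - Ss N ss j (a + 1) + 1)
            (n (a + 1) - Ss N ss j (a + 1) + i) from by
        ext x; simp only [Finset.mem_Icc, Finset.mem_Ioc]; omega,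
      prodIcc1, prodIccShift]
    rfl
  -- `Zhat 2 = 1`.
  have hZ2 : Zhat N n ss 2 = 1 := by
    rw [Zrow 2 le_rfl hN1]
    have e2 : Ss N ss 2 2 = n 2 := (hsum 2 (by omega) (by omega)).symm
    rw [show (2 : ℕ) - 1 = 1 from rfl, Finset.Icc_self, Finset.prod_singleton,
      show (1 : ℕ) + 1 = 2 from rfl, e2, Nat.sub_self, Bp_zeroR]
  -- Assemble.
  have hZprod : (∏ j ∈ Finset.Icc 3 (N - 1), Zhat N n ss j)
      = ∏ j ∈ Finset.Icc 2 (N - 1), Zhat N n ss j := by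
    rw [show Finset.Icc 2 (N - 1) = insert 2 (Finset.Icc 3 (N - 1)) from by
        ext x; simp only [Finset.mem_insert, Finset.mem_Icc]; omega,
      Finset.prod_insert (by simp only [Finset.mem_Icc]; omega), hZ2, one_mul]
  rw [hZprod, ← Finset.prod_mul_distrib]
  refine Finset.prod_congr rfl fun j hj => ?_
  simp only [Finset.mem_Icc] at hj
  rw [Zrow j hj.1 hj.2, Xrowlem j hj.1 hj.2, Rrow j hj.1 hj.2, ← Finset.prod_mul_distrib]
  exact Finset.prod_congr rfl fun a _ => mul_left_comm _ _ _
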